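/- Let D^i(C, t) = (q_1,...,q_r, z_{r+1}(C,t),...,z_{k+r}(C,t)) where z_j(C,t) = x_j + t(j−1)ε(C)e_1 for a configuration C = (q_1,...,q_r,x_{r+1},...,x_{k+r}) ∈ A_i^∘ with r ≤ i < k+r. Then D^i(C, t) ∈ F(ℝ^d − Q_r, k) for all t ∈ [0,1], and D^i(C, 1) has all k+r first coordinates pairwise distinct (i.e., D^i(C,1) ∈ A_{k+r}^∘). -/

import Mathlib

/-- The embedding `ℝ → ℝᵈ`, `a ↦ (a,0,…,0)`. -/
def embLine (d : ℕ) (hd : 0 < d) (a : ℝ) : Fin d → ℝ :=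
  fun j => if j = ⟨0, hd⟩ then a else 0

/-- The first standard basis vector `e_1 = (1,0,…,0)` of `ℝᵈ`. -/
def e1 (d : ℕ) (hd : 0 < d) : Fin d → ℝ :=
  fun j => if j = ⟨0, hd⟩ then 1 else 0

/-- `ε(C) = (1/(k+r)) · min { |p(x_a) − p(x_b)| : p(x_a) ≠ p(x_b) }`. -/
noncomputable def eps (d k r : ℕ) (hd : 0 < d)
    (C : Fin r ⊕ Fin k → (Fin d → ℝ)) : ℝ :=
  (1 / ((k : ℝ) + r)) *
    sInf {v : ℝ | ∃ a b, C a ⟨0, hd⟩ ≠ C b ⟨0, hd⟩ ∧ v = |C a ⟨0, hd⟩ - C b ⟨0, hd⟩|}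

/-- The desingularization deformation `D^i(C,t)`: the obstacles stay put, and the
moving point with label `j = r+1+a` is shifted by `t(j−1)ε(C)e_1`. -/
noncomputable def Dmap (d k r : ℕ) (hd : 0 < d) (q : Fin r → ℝ)
    (C : Fin r ⊕ Fin k → (Fin d → ℝ)) (t : ℝ) :
    Fin r ⊕ Fin k → (Fin d → ℝ) :=
  Sum.elim (fun j => embLine d hd (q j))
    (fun a => C (Sum.inr a) + (t * ((r : ℝ) + (a : ℕ)) * eps d k r hd C) • e1 d hd)

/-! Every point of `D^i(C, t)` is the corresponding point of `C` moved along `e₁` by an amount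
in `[0, m)`, where `m = (k + r) ε(C)` is the smallest nonzero gap between first coordinates of
`C` (positive because two obstacles already differ there). Such a move cannot close a gap of
size `≥ m`, so two points of `D^i(C, t)` meet, or share a first coordinate, only if they shared
one in `C` and moved by the same amount. For `t ∈ [0, 1]` this forces the points of `C` to
coincide. At `t = 1` the amounts `0` for obstacles and `(j - 1) ε(C) > 0` for the moving points
separate every pair except two obstacles, whose first coordinates are distinct. -/

open Function Set

theorem eq_and_eq_of_add_eq_add_of_lt_gap {x y u v m : ℝ} (hgap : x ≠ y → m ≤ |x - y|)
    (hu : u ∈ Ico 0 m) (hv : v ∈ Ico 0 m) (h : x + u = y + v) : x = y ∧ u = v := by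
  have hxy : x = y := by
    by_contra hne
    obtain ⟨hu0, hum⟩ := hu
    obtain ⟨hv0, hvm⟩ := hv
    have hlt : |x - y| < m := by rw [abs_sub_lt_iff]; constructor <;> linarith
    linarith [hgap hne]
  exact ⟨hxy, by subst hxy; linarith⟩

theorem injective_add_smul_of_lt_gap {ι : Type*} {d : ℕ} {C : ι → Fin d → ℝ} (hC : Injective C)
    {j : Fin d} {e : Fin d → ℝ} (he : e j = 1) {m : ℝ}
    (hgap : ∀ a b, C a j ≠ C b j → m ≤ |C a j - C b j|) {s : ι → ℝ} (hs : ∀ a, s a ∈ Ico 0 m) :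
    Injective fun a => C a + s a • e := by
  intro a b h
  dsimp only at h
  have hj : C a j + s a = C b j + s b := by simpa [he] using congrFun h j
  have hs_eq := (eq_and_eq_of_add_eq_add_of_lt_gap (hgap a b) (hs a) (hs b) hj).2
  rw [hs_eq] at h
  exact hC (add_right_cancel h)

theorem injective_add_of_lt_gap {ι : Type*} {f s : ι → ℝ} (hfs : Injective fun a => (f a, s a))
    {m : ℝ} (hgap : ∀ a b, f a ≠ f b → m ≤ |f a - f b|) (hs : ∀ a, s a ∈ Ico 0 m) :
    Injective fun a => f a + s a := by
  intro a b h
  obtain ⟨hf, hs_eq⟩ := eq_and_eq_of_add_eq_add_of_lt_gap (hgap a b) (hs a) (hs b) h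
  exact hfs (Prod.ext hf hs_eq)

theorem sInf_abs_sub_le {ι : Type*} (f : ι → ℝ) {a b : ι} (h : f a ≠ f b) :
    sInf {v : ℝ | ∃ a b, f a ≠ f b ∧ v = |f a - f b|} ≤ |f a - f b| :=
  csInf_le ⟨0, by rintro _ ⟨_, _, _, rfl⟩; exact abs_nonneg _⟩ ⟨a, b, h, rfl⟩

theorem sInf_abs_sub_pos {ι : Type*} [Finite ι] {f : ι → ℝ} {a b : ι} (h : f a ≠ f b) :
    0 < sInf {v : ℝ | ∃ a b, f a ≠ f b ∧ v = |f a - f b|} := by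
  set S := {v : ℝ | ∃ a b, f a ≠ f b ∧ v = |f a - f b|}
  have hfin : S.Finite := (Set.finite_range fun p : ι × ι => |f p.1 - f p.2|).subset
    (by rintro _ ⟨a, b, _, rfl⟩; exact ⟨(a, b), rfl⟩)
  have hne : S.Nonempty := ⟨_, a, b, h, rfl⟩
  obtain ⟨a', b', hne, hv⟩ := hne.csInf_mem hfin
  rw [hv]
  exact abs_pos.mpr (sub_ne_zero.mpr hne)

def displacement (r k : ℕ) (t ε : ℝ) : Fin r ⊕ Fin k → ℝ :=
  Sum.elim (fun _ => 0) fun a => t * ((r : ℝ) + (a : ℕ)) * ε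

theorem displacement_mem_Ico {r k : ℕ} {t ε : ℝ} (ht : t ∈ Icc 0 1) (hε : 0 < ε)
    (x : Fin r ⊕ Fin k) : displacement r k t ε x ∈ Ico 0 (((k : ℝ) + r) * ε) := by
  obtain ⟨ht0, ht1⟩ := ht
  rcases x with j | a
  · have : (0 : ℝ) < r := by exact_mod_cast j.pos
    exact ⟨le_rfl, by simp only [displacement, Sum.elim_inl]; positivity⟩
  · have ha : ((a : ℕ) : ℝ) < k := by exact_mod_cast a.isLt
    have hcoef : 0 ≤ ((r : ℝ) + (a : ℕ)) * ε := by positivity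
    simp only [displacement, Sum.elim_inr, mem_Ico, mul_assoc]
    constructor
    · positivity
    · calc t * (((r : ℝ) + (a : ℕ)) * ε) ≤ ((r : ℝ) + (a : ℕ)) * ε :=
            mul_le_of_le_one_left hcoef ht1
        _ < ((k : ℝ) + r) * ε := mul_lt_mul_of_pos_right (by linarith) hε

section Deformation

variable {d k r : ℕ} {hd : 0 < d} {q : Fin r → ℝ} {C : Fin r ⊕ Fin k → (Fin d → ℝ)}

theorem Dmap_eq_add_smul (hfib : ∀ j, C (Sum.inl j) = embLine d hd (q j)) (t : ℝ) :
    Dmap d k r hd q C t = fun x => C x + displacement r k t (eps d k r hd C) x • e1 d hd := by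
  funext x
  rcases x with j | a <;> simp [Dmap, displacement, hfib]

theorem mul_eps_le_abs_sub {a b : Fin r ⊕ Fin k} (h : C a ⟨0, hd⟩ ≠ C b ⟨0, hd⟩) :
    ((k : ℝ) + r) * eps d k r hd C ≤ |C a ⟨0, hd⟩ - C b ⟨0, hd⟩| := by
  have hkr : (k : ℝ) + r ≠ 0 := by
    have : 0 < k + r := by rcases a with j | a <;> [have := j.pos; have := a.pos] <;> omega
    exact_mod_cast this.ne'
  rw [eps, ← mul_assoc, mul_one_div_cancel hkr, one_mul]
  exact sInf_abs_sub_le (fun x => C x ⟨0, hd⟩) h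

theorem eps_pos (hr : 2 ≤ r) (hC : Injective C) (hfib : ∀ j, C (Sum.inl j) = embLine d hd (q j)) :
    0 < eps d k r hd C := by
  have hne : C (Sum.inl ⟨0, by omega⟩) ⟨0, hd⟩ ≠ C (Sum.inl ⟨1, by omega⟩) ⟨0, hd⟩ := by
    intro h
    have h01 := hfib ⟨0, by omega⟩
    have h11 := hfib ⟨1, by omega⟩
    simp only [h01, h11, embLine, if_true] at h
    have := hC (h01.trans (h ▸ h11.symm))
    simp at this
  have : (0 : ℝ) < r := by exact_mod_cast (by omega : 0 < r)
  exact mul_pos (by positivity) (sInf_abs_sub_pos (f := fun x => C x ⟨0, hd⟩) hne)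

theorem injective_prod_displacement_one (hC : Injective C)
    (hfib : ∀ j, C (Sum.inl j) = embLine d hd (q j)) {ε : ℝ} (hε : 0 < ε) :
    Injective fun x => (C x ⟨0, hd⟩, displacement r k 1 ε x) := by
  have hq : ∀ j, C (Sum.inl j) ⟨0, hd⟩ = q j := fun j => by simp [hfib, embLine]
  rintro (j | a) (j' | b) h <;>
    simp only [Prod.mk.injEq, displacement, Sum.elim_inl, Sum.elim_inr, one_mul] at h
  · apply hC
    rw [hfib, hfib, ← hq, ← hq, h.1]
  · have : (0 : ℝ) < r := by exact_mod_cast j.pos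
    have : (0 : ℝ) < (r + (b : ℕ)) * ε := by positivity
    linarith [h.2]
  · have : (0 : ℝ) < r := by exact_mod_cast j'.pos
    have : (0 : ℝ) < (r + (a : ℕ)) * ε := by positivity
    linarith [h.2]
  · have hab : ((a : ℕ) : ℝ) = (b : ℕ) := add_left_cancel (mul_right_cancel₀ hε.ne' h.2)
    exact congrArg Sum.inr (Fin.ext (by exact_mod_cast hab))

end Deformation

theorem stmt16 (d k r : ℕ) (hd : 0 < d) (hr : 2 ≤ r)
    (q : Fin r → ℝ)
    (C : Fin r ⊕ Fin k → (Fin d → ℝ)) (hC : Function.Injective C)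
    (hfib : ∀ j, C (Sum.inl j) = embLine d hd (q j)) :
    (∀ t ∈ Set.Icc (0 : ℝ) 1, Function.Injective (Dmap d k r hd q C t)) ∧
    Function.Injective (fun a => Dmap d k r hd q C 1 a ⟨0, hd⟩) := by
  have hε := eps_pos hr hC hfib
  have he1 : e1 d hd ⟨0, hd⟩ = 1 := if_pos rfl
  refine ⟨fun t ht => ?_, ?_⟩
  · rw [Dmap_eq_add_smul hfib]
    exact injective_add_smul_of_lt_gap hC he1 (fun a b => mul_eps_le_abs_sub)
      (displacement_mem_Ico ht hε)
  · rw [Dmap_eq_add_smul hfib]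
    simpa [he1] using injective_add_of_lt_gap (injective_prod_displacement_one hC hfib hε)
      (fun a b => mul_eps_le_abs_sub) (displacement_mem_Ico ⟨zero_le_one, le_rfl⟩ hε)
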